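/- arXiv:1109.5438 — 8 statements merged into one kernel-verified Lean document; each statement's English description precedes it below -/
import Mathlib

section
/- If a set system S on a set X has finite VC dimension d, then for every n, the shatter function satisfies π_S(n) ≤ C(n,0) + C(n,1) + ... + C(n,d). -/
/-- A finite set `A` is shattered by the set system `S` if every subset of `A`
is cut out by some member of `S`. -/
def Shattered {X : Type*} (S : Set (Set X)) (A : Finset X) : Prop :=
  ∀ B ⊆ A, ∃ s ∈ S, (A : Set X) ∩ s = (B : Set X)

/-! Pajor's inequality `#𝒜 ≤ #𝒜.shatterer` reduces the bound to counting the sets shattered by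
the trace of `S` on `A`; these are subsets of `A` that `S` itself shatters, so they have at most
`d` elements. -/

open Finset

namespace Finset

variable {α : Type*} [DecidableEq α] {𝒜 : Finset (Finset α)} {A : Finset α} {d : ℕ}

lemma card_le_sum_choose_of_shatters_card_le (h𝒜 : ∀ B ∈ 𝒜, B ⊆ A)
    (hd : ∀ s, 𝒜.Shatters s → #s ≤ d) : #𝒜 ≤ ∑ i ∈ range (d + 1), (#A).choose i := by
  have hsub : 𝒜.shatterer ⊆ (range (d + 1)).biUnion (A.powersetCard ·) := by
    intro s hs
    rw [mem_shatterer] at hs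
    obtain ⟨u, hu, hsu⟩ := hs.exists_superset
    exact mem_biUnion.2 ⟨#s, mem_range.2 (Nat.lt_succ_of_le (hd s hs)),
      mem_powersetCard.2 ⟨hsu.trans (h𝒜 u hu), rfl⟩⟩
  calc #𝒜 ≤ #𝒜.shatterer := card_le_card_shatterer 𝒜
    _ ≤ #((range (d + 1)).biUnion (A.powersetCard ·)) := card_le_card hsub
    _ ≤ ∑ i ∈ range (d + 1), #(A.powersetCard i) := card_biUnion_le
    _ = ∑ i ∈ range (d + 1), (#A).choose i := by simp_rw [card_powersetCard]

end Finset

section Trace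

open Classical

variable {X : Type*} (S : Set (Set X)) (A : Finset X)

/-- The trace `{A ∩ s | s ∈ S}` of `S` on `A`, as a family of finsets. -/
noncomputable def trace : Finset (Finset X) :=
  {B ∈ A.powerset | ∃ s ∈ S, (A : Set X) ∩ s = (B : Set X)}

lemma coe_trace :
    (trace S A : Set (Finset X)) = {B | B ⊆ A ∧ ∃ s ∈ S, (A : Set X) ∩ s = (B : Set X)} := by
  ext B
  simp [trace]

lemma subset_of_mem_trace {B : Finset X} (hB : B ∈ trace S A) : B ⊆ A :=
  mem_powerset.1 (mem_filter.1 hB).1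

variable {S A}

lemma Finset.Shatters.shattered_of_trace {s : Finset X} (hs : (trace S A).Shatters s) :
    Shattered S s := by
  obtain ⟨u, hu, hsu⟩ := hs.exists_superset
  have hsA : (s : Set X) ⊆ A := coe_subset.2 (hsu.trans (subset_of_mem_trace S A hu))
  intro B hB
  obtain ⟨v, hv, rfl⟩ := hs hB
  obtain ⟨t, htS, hAt⟩ := (mem_filter.1 hv).2
  refine ⟨t, htS, ?_⟩
  rw [coe_inter, ← hAt, ← Set.inter_assoc, Set.inter_eq_left.2 hsA]

end Trace

theorem stmt0_general {X : Type*} (S : Set (Set X)) (d : ℕ)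
    (hbd : ∀ A : Finset X, Shattered S A → A.card ≤ d) :
    ∀ (n : ℕ) (A : Finset X), A.card = n →
      Set.ncard {B : Finset X | B ⊆ A ∧ ∃ s ∈ S, (A : Set X) ∩ s = (B : Set X)} ≤
        ∑ i ∈ Finset.range (d + 1), n.choose i := by
  classical
  rintro n A rfl
  rw [← coe_trace, Set.ncard_coe_finset]
  exact card_le_sum_choose_of_shatters_card_le (fun _ ↦ subset_of_mem_trace S A)
    fun s hs ↦ hbd s hs.shattered_of_trace

/-- Sauer–Shelah: if `S` has finite VC dimension `d`, then for every `n` the shatter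
function satisfies `π_S(n) ≤ C(n,0) + ⋯ + C(n,d)`. -/
theorem stmt0 {X : Type*} (S : Set (Set X)) (d : ℕ)
    (hex : ∃ A : Finset X, A.card = d ∧ Shattered S A)
    (hbd : ∀ A : Finset X, Shattered S A → A.card ≤ d) :
    ∀ (n : ℕ) (A : Finset X), A.card = n →
      Set.ncard {B : Finset X | B ⊆ A ∧ ∃ s ∈ S, (A : Set X) ∩ s = (B : Set X)} ≤
        ∑ i ∈ Finset.range (d + 1), n.choose i :=
  stmt0_general S d hbd
end

section
/- For any set system B on a set X, the breadth of B is at least the independence dimension of B. -/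
/-- The breadth of a set system is at least its independence dimension:
if `𝓑` has breadth at most `d` (every nonempty intersection of more than `d`
members of `𝓑` equals an intersection of `d` of them), then any independent
sequence of members of `𝓑` (all `2^n` Boolean atoms nonempty) has length at most `d`. -/
theorem stmt1 {X : Type*} (𝓑 : Set (Set X)) (d n : ℕ) (hd : 0 < d)
    (hbreadth : ∀ (m : ℕ) (A : Fin m → Set X), d < m → (∀ i, A i ∈ 𝓑) →
      (⋂ i, A i).Nonempty →
      ∃ s : Finset (Fin m), s.card = d ∧ (⋂ i ∈ s, A i) = ⋂ i, A i)
    (A : Fin n → Set X) (hA : ∀ i, A i ∈ 𝓑)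
    (hind : ∀ I : Finset (Fin n),
      (⋂ i, if i ∈ I then A i else (A i)ᶜ).Nonempty) :
    n ≤ d := by
  by_contra h
  push_neg at h
  have hne : (⋂ i, A i).Nonempty := by
    have := hind Finset.univ
    simpa using this
  obtain ⟨s, hcard, hs⟩ := hbreadth n A h hA hne
  have hex : ∃ j : Fin n, j ∉ s := by
    by_contra hj
    push_neg at hj
    have : s = Finset.univ := Finset.eq_univ_iff_forall.2 hj
    rw [this, Finset.card_univ, Fintype.card_fin] at hcard
    omega
  obtain ⟨j, hj⟩ := hex
  obtain ⟨x, hx⟩ := hind (Finset.univ.erase j)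
  have hx' : ∀ i, x ∈ (if i ∈ Finset.univ.erase j then A i else (A i)ᶜ) := by
    simpa [Set.mem_iInter] using hx
  have hxj : x ∈ (A j)ᶜ := by
    have := hx' j
    simpa using this
  have hxs : x ∈ ⋂ i ∈ s, A i := by
    refine Set.mem_iInter₂.2 fun i hi => ?_
    have hij : i ≠ j := fun e => hj (e ▸ hi)
    have := hx' i
    simpa [Finset.mem_erase, hij] using this
  rw [hs] at hxs
  exact hxj (Set.mem_iInter.1 hxs j)
end

section
/- Let G be a group and H a collection of subgroups of G. Then the breadth of H equals the independence dimension of H. -/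
/-!
Given an irredundant finite family `(H_i)_{i ∈ T}` of subgroups, choose
`x_i ∈ ⋂_{j ≠ i} H_j` with `x_i ∉ H_i`. For `I ⊆ T`, the product of the `x_i` over `i ∉ I`
(in any order) lies in `H_j` exactly when `j ∈ I`, so all Boolean atoms of the `H_i` are nonempty.
Hence independence dimension `≤ d` bounds irredundant subfamilies by `d`, i.e. breadth `≤ d`.
Conversely, if `d` members of `H_0, …, H_d` already cut out `⋂ H_i`, the atom lying in those `d`
and outside the remaining one is empty.
-/

namespace Set

variable {α ι : Type*} {A : ι → Set α}

theorem iInter_ite_compl_eq_empty_of_biInter_eq [DecidableEq ι] {s : Finset ι}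
    (hs : ⋂ i ∈ s, A i = ⋂ i, A i) {j : ι} (hj : j ∉ s) :
    ⋂ i, (if i ∈ s then A i else (A i)ᶜ) = ∅ := by
  refine eq_empty_of_forall_notMem fun x hx => ?_
  rw [mem_iInter] at hx
  have hxs : x ∈ ⋂ i ∈ s, A i := mem_iInter₂.2 fun i hi => by simpa [hi] using hx i
  have hxj : x ∈ A j := mem_iInter.1 (hs ▸ hxs) j
  simpa [hj, hxj] using hx j

theorem exists_finset_biInter_eq_iInter_irredundant [Finite ι] [DecidableEq ι] (A : ι → Set α) :
    ∃ T : Finset ι, ⋂ i ∈ T, A i = ⋂ i, A i ∧ ∀ i ∈ T, ¬ ⋂ j ∈ T.erase i, A j ⊆ A i := by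
  classical
  have := Fintype.ofFinite ι
  obtain ⟨T, hT, hmin⟩ := Finset.exists_min_image
    ({T | ⋂ i ∈ T, A i = ⋂ i, A i} : Finset (Finset ι)) Finset.card ⟨Finset.univ, by simp⟩
  rw [Finset.mem_filter] at hT
  refine ⟨T, hT.2, fun i hi hsub => ?_⟩
  have herase : ⋂ j ∈ T.erase i, A j = ⋂ i, A i := by
    rw [← hT.2, ← inter_eq_right.2 hsub, ← Finset.set_biInter_insert, Finset.insert_erase hi]
  exact (hmin (T.erase i) (by simpa using herase)).not_gt (Finset.card_erase_lt_of_mem hi)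

end Set

namespace Subgroup

variable {G ι κ : Type*} [Group G] {H : ι → Subgroup G} {x : ι → G}

theorem list_prod_map_mem_iff (hx : ∀ i j, i ≠ j → x i ∈ H j) (hx' : ∀ i, x i ∉ H i)
    {l : List ι} (hl : l.Nodup) (j : ι) : (l.map x).prod ∈ H j ↔ j ∉ l := by
  induction l with
  | nil => simp [(H j).one_mem]
  | cons a l ih =>
    rw [List.nodup_cons] at hl
    rw [List.map_cons, List.prod_cons, List.mem_cons, not_or]
    by_cases haj : a = j
    · subst haj
      simpa [hl.1] using mt ((H a).mul_mem_cancel_right ((ih hl.2).2 hl.1)).1 (hx' a)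
    · rw [(H j).mul_mem_cancel_left (hx a j haj), ih hl.2]
      exact ⟨fun h => ⟨Ne.symm haj, h⟩, And.right⟩

theorem iInter_ite_compl_nonempty [Fintype ι] [DecidableEq ι]
    (hx : ∀ i j, i ≠ j → x i ∈ H j) (hx' : ∀ i, x i ∉ H i) (I : Finset ι) :
    (⋂ i, if i ∈ I then (H i : Set G) else (H i : Set G)ᶜ).Nonempty := by
  refine ⟨(Iᶜ.toList.map x).prod, Set.mem_iInter.2 fun j => ?_⟩
  have := list_prod_map_mem_iff hx hx' (Iᶜ).nodup_toList j
  by_cases hj : j ∈ I <;> simp_all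

theorem iInter_ite_compl_nonempty_of_irredundant [DecidableEq ι] [Fintype κ] [DecidableEq κ]
    {T : Finset ι} (hT : ∀ i ∈ T, ¬ ⋂ j ∈ T.erase i, (H j : Set G) ⊆ H i)
    {e : κ → ι} (he : Function.Injective e) (heT : ∀ k, e k ∈ T) (I : Finset κ) :
    (⋂ k, if k ∈ I then (H (e k) : Set G) else (H (e k) : Set G)ᶜ).Nonempty := by
  choose! y hy hy' using fun i hi => Set.not_subset.1 (hT i hi)
  refine iInter_ite_compl_nonempty (H := H ∘ e) (x := y ∘ e) (fun k l hkl => ?_)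
    (fun k => hy' _ (heT k)) I
  exact Set.mem_iInter₂.1 (hy _ (heT k)) (e l) (Finset.mem_erase.2 ⟨he.ne hkl.symm, heT l⟩)

end Subgroup

theorem stmt2_general {G : Type*} [Group G] (𝓗 : Set (Subgroup G)) (d : ℕ) :
    (∀ (m : ℕ) (A : Fin m → Subgroup G), d < m → (∀ i, A i ∈ 𝓗) →
        (⋂ i, (A i : Set G)).Nonempty →
        ∃ s : Finset (Fin m), s.card = d ∧
          (⋂ i ∈ s, (A i : Set G)) = ⋂ i, (A i : Set G))
    ↔ (∀ A : Fin (d + 1) → Subgroup G, (∀ i, A i ∈ 𝓗) →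
        ∃ I : Finset (Fin (d + 1)),
          ¬ (⋂ i, if i ∈ I then (A i : Set G) else ((A i : Set G))ᶜ).Nonempty) := by
  constructor
  · intro hbreadth A hA
    obtain ⟨s, hcard, hs⟩ := hbreadth (d + 1) A (lt_add_one d) hA
      ⟨1, Set.mem_iInter.2 fun i => (A i).one_mem⟩
    obtain ⟨j, hj⟩ : ∃ j, j ∉ s := by
      by_contra! h
      simp [Finset.eq_univ_of_forall h] at hcard
    exact ⟨s, Set.not_nonempty_iff_eq_empty.2 (Set.iInter_ite_compl_eq_empty_of_biInter_eq hs hj)⟩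
  · intro hindep m A hm hA _
    obtain ⟨T, hT, hirr⟩ := Set.exists_finset_biInter_eq_iInter_irredundant fun i => (A i : Set G)
    have hTcard : T.card ≤ d := by
      by_contra! hlt
      let e : Fin (d + 1) → Fin m := fun k => T.equivFin.symm (Fin.castLE hlt k)
      have he : Function.Injective e :=
        (Subtype.val_injective.comp T.equivFin.symm.injective).comp (Fin.castLE_injective hlt)
      obtain ⟨I, hI⟩ := hindep (fun k => A (e k)) fun k => hA (e k)
      exact hI (Subgroup.iInter_ite_compl_nonempty_of_irredundant hirr he
        (fun k => (T.equivFin.symm _).2) I)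
    obtain ⟨s, hTs, -, hscard⟩ :=
      Finset.exists_subsuperset_card_eq (Finset.subset_univ T) hTcard (by simpa using hm.le)
    refine ⟨s, hscard, ((Set.biInter_subset_biInter_left hTs).trans hT.le).antisymm ?_⟩
    exact Set.subset_iInter₂ fun i _ => Set.iInter_subset _ i

/-- Poizat's lemma: for a collection `𝓗` of subgroups of a group `G`, the breadth
of `𝓗` equals its independence dimension.  This is expressed by saying that for
every `d > 0`, `𝓗` has breadth at most `d` if and only if `𝓗` has independence
dimension at most `d` (no independent family of `d+1` subgroups). -/
theorem stmt2 {G : Type*} [Group G] (𝓗 : Set (Subgroup G)) (d : ℕ) (hd : 0 < d) :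
    (∀ (m : ℕ) (A : Fin m → Subgroup G), d < m → (∀ i, A i ∈ 𝓗) →
        (⋂ i, (A i : Set G)).Nonempty →
        ∃ s : Finset (Fin m), s.card = d ∧
          (⋂ i ∈ s, (A i : Set G)) = ⋂ i, (A i : Set G))
    ↔ (∀ A : Fin (d + 1) → Subgroup G, (∀ i, A i ∈ 𝓗) →
        ∃ I : Finset (Fin (d + 1)),
          ¬ (⋂ i, if i ∈ I then (A i : Set G) else ((A i : Set G))ᶜ).Nonempty) :=
  stmt2_general 𝓗 d
end

section
/- Let G be a group and H a collection of subgroups of G of breadth d. Then the collection of all left cosets of subgroups in H also has breadth at most d. -/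
open scoped Pointwise

/-- If a collection `𝓗` of subgroups of a group `G` has breadth `d`, then the
collection of all left cosets of subgroups in `𝓗` has breadth at most `d`. -/
theorem stmt4 {G : Type*} [Group G] (𝓗 : Set (Subgroup G)) (d : ℕ) (hd : 0 < d)
    (hbreadth : ∀ (m : ℕ) (A : Fin m → Subgroup G), d < m → (∀ i, A i ∈ 𝓗) →
      (⋂ i, (A i : Set G)).Nonempty →
      ∃ s : Finset (Fin m), s.card = d ∧
        (⋂ i ∈ s, (A i : Set G)) = ⋂ i, (A i : Set G)) :
    ∀ (m : ℕ) (B : Fin m → Set G), d < m →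
      (∀ i, ∃ g : G, ∃ H ∈ 𝓗, B i = g • (H : Set G)) →
      (⋂ i, B i).Nonempty →
      ∃ s : Finset (Fin m), s.card = d ∧ (⋂ i ∈ s, B i) = ⋂ i, B i := by
  intro m B hdm hB hne
  obtain ⟨x, hx⟩ := hne
  choose g H hH hBi using hB
  have hBx : ∀ i, B i = x • (H i : Set G) := by
    intro i
    have hxi : x ∈ B i := Set.mem_iInter.mp hx i
    rw [hBi i] at hxi ⊢
    obtain ⟨y, hy, rfl⟩ := hxi
    show g i • (H i : Set G) = (g i * y) • (H i : Set G)
    rw [mul_smul, smul_coe_set hy]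
  have hAne : (⋂ i, (H i : Set G)).Nonempty :=
    ⟨1, Set.mem_iInter.mpr fun i => (H i).one_mem⟩
  obtain ⟨s, hs, heq⟩ := hbreadth m H hdm hH hAne
  refine ⟨s, hs, ?_⟩
  calc (⋂ i ∈ s, B i) = x • ⋂ i ∈ s, (H i : Set G) := by
        simp_rw [hBx, Set.smul_set_iInter]
    _ = x • ⋂ i, (H i : Set G) := by rw [heq]
    _ = ⋂ i, B i := by simp_rw [hBx, Set.smul_set_iInter]
end

section
/- Let X be a set, B a collection of subsets of X of breadth d, N > 0, and S a set system on X such that every set in S is a Boolean combination of at most N sets from B. Then for every t, the number of nonempty atoms generated by any t sets from S is at most the sum over i = 0,...,d of C(Nt, i). -/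
/-!
Put the `N t` sets of `𝓑` from which `A 0, …, A (t-1)` are built into one family `B`. The atom
of a point is determined by which sets of `B` contain it. By breadth, the intersection `P` of
those sets is already the intersection of at most `d` of them, and that subfamily recovers the
whole pattern: the point lies in `B k` exactly when `P ⊆ B k`. So the nonempty atoms inject
into the subsets of size at most `d` of an `N t`-element index set.
-/

/-- Boolean combinations of sets from a family `𝓖`. -/
inductive BoolComb {X : Type*} (𝓖 : Set (Set X)) : Set X → Prop
  | base : ∀ s ∈ 𝓖, BoolComb 𝓖 s
  | compl : ∀ s : Set X, BoolComb 𝓖 s → BoolComb 𝓖 sᶜ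
  | union : ∀ s t : Set X, BoolComb 𝓖 s → BoolComb 𝓖 t → BoolComb 𝓖 (s ∪ t)
  | inter : ∀ s t : Set X, BoolComb 𝓖 s → BoolComb 𝓖 t → BoolComb 𝓖 (s ∩ t)

open Finset

theorem BoolComb.mem_iff_of_forall_mem_iff {X : Type*} {𝓖 : Set (Set X)} {s : Set X}
    (h : BoolComb 𝓖 s) {x y : X} (hxy : ∀ u ∈ 𝓖, x ∈ u ↔ y ∈ u) : x ∈ s ↔ y ∈ s := by
  induction h with
  | base u hu => exact hxy u hu
  | compl u _ ih => simp only [Set.mem_compl_iff, ih]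
  | union u v _ _ ihu ihv => simp only [Set.mem_union, ihu, ihv]
  | inter u v _ _ ihu ihv => simp only [Set.mem_inter_iff, ihu, ihv]

def BreadthLE {X : Type*} (𝓑 : Set (Set X)) (d : ℕ) : Prop :=
  ∀ (m : ℕ) (A : Fin m → Set X), d < m → (∀ i, A i ∈ 𝓑) → (⋂ i, A i).Nonempty →
    ∃ s : Finset (Fin m), s.card = d ∧ (⋂ i ∈ s, A i) = ⋂ i, A i

theorem BreadthLE.exists_subset_card_le_biInter_eq {X ι : Type*} {𝓑 : Set (Set X)} {d : ℕ}
    (h𝓑 : BreadthLE 𝓑 d) (B : ι → Set X) (hB : ∀ i, B i ∈ 𝓑) (s : Finset ι)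
    (hne : (⋂ i ∈ s, B i).Nonempty) :
    ∃ J ⊆ s, #J ≤ d ∧ ⋂ i ∈ J, B i = ⋂ i ∈ s, B i := by
  classical
  rcases le_or_gt #s d with hs | hs
  · exact ⟨s, subset_rfl, hs, rfl⟩
  let e := s.equivFin
  have hreindex : ⋂ a, B (e.symm a) = ⋂ i ∈ s, B i := by
    rw [e.symm.surjective.iInter_comp (fun i : s => B i), ← set_biInter_coe,
      Set.biInter_eq_iInter]
    rfl
  obtain ⟨J, hJ, hJeq⟩ := h𝓑 #s (fun a => B (e.symm a)) hs (fun a => hB _) (hreindex ▸ hne)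
  refine ⟨J.image (fun a => (e.symm a : ι)), ?_, card_image_le.trans hJ.le, ?_⟩
  · simp [subset_iff]
  · rw [← hreindex, ← hJeq, set_biInter_finset_image]

theorem BreadthLE.exists_code_card_le {X ι : Type*} [Fintype ι] {𝓑 : Set (Set X)} {d : ℕ}
    (h𝓑 : BreadthLE 𝓑 d) (B : ι → Set X) (hB : ∀ i, B i ∈ 𝓑) :
    ∃ φ : X → Finset ι, (∀ x, #(φ x) ≤ d) ∧
      ∀ x y, φ x = φ y → ∀ k, x ∈ B k ↔ y ∈ B k := by
  classical
  have hcode : ∀ x, ∃ J : Finset ι, #J ≤ d ∧ ∀ k, x ∈ B k ↔ ⋂ j ∈ J, B j ⊆ B k := by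
    intro x
    let s : Finset ι := {k | x ∈ B k}
    have hx : x ∈ ⋂ k ∈ s, B k := by simp [s]
    obtain ⟨J, -, hJ, hJs⟩ := h𝓑.exists_subset_card_le_biInter_eq B hB s ⟨x, hx⟩
    refine ⟨J, hJ, fun k => ⟨fun hk => ?_, fun hsub => hsub (hJs ▸ hx)⟩⟩
    exact hJs ▸ Set.biInter_subset_of_mem (by simpa [s] using hk)
  choose φ hφd hφ using hcode
  exact ⟨φ, hφd, fun x y hxy k => by rw [hφ, hφ, hxy]⟩

def nonemptyAtoms {X ι : Type*} [DecidableEq ι] (A : ι → Set X) : Set (Set X) :=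
  {T | T.Nonempty ∧ ∃ I : Finset ι, T = ⋂ i, if i ∈ I then A i else (A i)ᶜ}

theorem mem_iInter_ite_compl_iff {X ι : Type*} [DecidableEq ι] (A : ι → Set X)
    (I : Finset ι) (x : X) :
    (x ∈ ⋂ i, if i ∈ I then A i else (A i)ᶜ) ↔ ∀ i, i ∈ I ↔ x ∈ A i := by
  simp only [Set.mem_iInter]
  refine forall_congr' fun i => ?_
  split_ifs with h <;> simp [h]

theorem ncard_nonemptyAtoms_le_of_code {X ι β : Type*} [DecidableEq ι] (A : ι → Set X)
    (φ : X → β) (s : Finset β) (hφs : ∀ x, φ x ∈ s)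
    (hφ : ∀ x y, φ x = φ y → ∀ i, x ∈ A i ↔ y ∈ A i) :
    (nonemptyAtoms A).ncard ≤ #s := by
  rcases isEmpty_or_nonempty X with hX | hX
  · simp [nonemptyAtoms, Set.Nonempty]
  rw [← Set.ncard_coe_finset]
  refine Set.ncard_le_ncard_of_injOn (fun T => φ (Classical.epsilon (· ∈ T)))
    (fun T _ => hφs _) ?_ s.finite_toSet
  rintro T₁ ⟨hne₁, I₁, rfl⟩ T₂ ⟨hne₂, I₂, rfl⟩ h
  have hx₁ := (mem_iInter_ite_compl_iff A I₁ _).1 (Classical.epsilon_spec hne₁)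
  have hx₂ := (mem_iInter_ite_compl_iff A I₂ _).1 (Classical.epsilon_spec hne₂)
  have hI : I₁ = I₂ := by
    ext i
    rw [hx₁, hφ _ _ h, hx₂]
  rw [hI]

theorem card_filter_card_le_le_sum_choose {ι : Type*} [Fintype ι] [DecidableEq ι] (d : ℕ) :
    #{J : Finset ι | #J ≤ d} ≤ ∑ i ∈ range (d + 1), (Fintype.card ι).choose i :=
  calc #{J : Finset ι | #J ≤ d}
      ≤ #((range (d + 1)).biUnion fun i => powersetCard i (univ : Finset ι)) :=
        card_le_card fun J hJ => by simp at hJ ⊢; omega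
    _ ≤ ∑ i ∈ range (d + 1), (Fintype.card ι).choose i :=
        card_biUnion_le.trans_eq (by simp [card_powersetCard])

theorem stmt10_general {X : Type*} (𝓑 𝓢 : Set (Set X)) (d N : ℕ)
    (hbreadth : ∀ (m : ℕ) (A : Fin m → Set X), d < m → (∀ i, A i ∈ 𝓑) →
      (⋂ i, A i).Nonempty →
      ∃ s : Finset (Fin m), s.card = d ∧ (⋂ i ∈ s, A i) = ⋂ i, A i)
    (hS : ∀ s ∈ 𝓢, ∃ g : Fin N → Set X, (∀ i, g i ∈ 𝓑) ∧ BoolComb (Set.range g) s)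
    (t : ℕ) (A : Fin t → Set X) (hA : ∀ i, A i ∈ 𝓢) :
    Set.ncard {T : Set X | T.Nonempty ∧ ∃ I : Finset (Fin t),
        T = ⋂ i, if i ∈ I then A i else (A i)ᶜ} ≤
      ∑ i ∈ Finset.range (d + 1), (N * t).choose i := by
  choose g hg𝓑 hgA using fun i => hS (A i) (hA i)
  let B : Fin N × Fin t → Set X := fun p => g p.2 p.1
  obtain ⟨φ, hφd, hφ⟩ := BreadthLE.exists_code_card_le hbreadth B (fun p => hg𝓑 _ _)
  have hφA : ∀ x y, φ x = φ y → ∀ i, x ∈ A i ↔ y ∈ A i := by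
    rintro x y hxy i
    exact (hgA i).mem_iff_of_forall_mem_iff fun _ ⟨j, hj⟩ => hj ▸ hφ x y hxy (j, i)
  calc (nonemptyAtoms A).ncard
      ≤ #{J : Finset (Fin N × Fin t) | #J ≤ d} :=
        ncard_nonemptyAtoms_le_of_code A φ _ (fun x => by simpa using hφd x) hφA
    _ ≤ ∑ i ∈ range (d + 1), (N * t).choose i := by
        simpa using card_filter_card_le_le_sum_choose (ι := Fin N × Fin t) d

/-- If `𝓑` has breadth `d` and every set of `𝓢` is a Boolean combination of at most
`N` sets of `𝓑`, then any `t` sets of `𝓢` generate at most `∑_{i≤d} C(Nt,i)` nonempty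
atoms. -/
theorem stmt10 {X : Type*} (𝓑 𝓢 : Set (Set X)) (d N : ℕ) (hd : 0 < d) (hN : 0 < N)
    (hbreadth : ∀ (m : ℕ) (A : Fin m → Set X), d < m → (∀ i, A i ∈ 𝓑) →
      (⋂ i, A i).Nonempty →
      ∃ s : Finset (Fin m), s.card = d ∧ (⋂ i ∈ s, A i) = ⋂ i, A i)
    (hS : ∀ s ∈ 𝓢, ∃ g : Fin N → Set X, (∀ i, g i ∈ 𝓑) ∧ BoolComb (Set.range g) s)
    (t : ℕ) (A : Fin t → Set X) (hA : ∀ i, A i ∈ 𝓢) :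
    Set.ncard {T : Set X | T.Nonempty ∧ ∃ I : Finset (Fin t),
        T = ⋂ i, if i ∈ I then A i else (A i)ᶜ} ≤
      ∑ i ∈ Finset.range (d + 1), (N * t).choose i :=
  stmt10_general 𝓑 𝓢 d N hbreadth hS t A hA
end

section
/- Let K be a field with a valuation v taking values in ℤ ∪ {∞} (say K = ℚ_p with the p-adic valuation), and let A ⊆ K be a finite nonempty set. Then there are at most |A| − 1 distinct closed balls of the form B_{v(a−b)}(a) = {x : v(x−a) ≥ v(a−b)} with a, b ∈ A, a ≠ b. -/
/-! In an ultrametric space every closed ball containing `a` and `b` contains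
`closedBall a (dist a b)`, so each of the balls in question is determined by its trace on `A`.
Since closed balls are nested or disjoint, these traces form a laminar family of subsets of `A`,
each with at least two elements. Such a family has at most `|A| - 1` members: delete one of two
points of a minimal member from everything and induct on `|A|`. -/

open Metric

def IsLaminar {α : Type*} (F : Finset (Finset α)) : Prop :=
  ∀ T₁ ∈ F, ∀ T₂ ∈ F, T₁ ⊆ T₂ ∨ T₂ ⊆ T₁ ∨ Disjoint T₁ T₂

namespace IsLaminar

variable {α : Type*} {F : Finset (Finset α)}

theorem mono {G : Finset (Finset α)} (hF : IsLaminar F) (hGF : G ⊆ F) : IsLaminar G :=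
  fun T₁ h₁ T₂ h₂ => hF T₁ (hGF h₁) T₂ (hGF h₂)

theorem image_erase [DecidableEq α] (hF : IsLaminar F) (y : α) :
    IsLaminar (F.image (·.erase y)) := by
  simp only [IsLaminar, Finset.forall_mem_image]
  intro T₁ h₁ T₂ h₂
  rcases hF T₁ h₁ T₂ h₂ with h | h | h
  · exact .inl (Finset.erase_subset_erase y h)
  · exact .inr (.inl (Finset.erase_subset_erase y h))
  · exact .inr (.inr (h.mono (Finset.erase_subset y T₁) (Finset.erase_subset y T₂)))

theorem subset_of_minimal (hF : IsLaminar F) {M T : Finset α} (hM : Minimal (· ∈ F) M)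
    (hT : T ∈ F) (hTM : T ≠ M) {z : α} (hzM : z ∈ M) (hzT : z ∈ T) : M ⊆ T := by
  rcases hF T hT M hM.prop with h | h | h
  · exact absurd (hM.eq_of_le hT h) hTM
  · exact h
  · exact absurd hzM (Finset.disjoint_left.mp h hzT)

-- Every other member of `F` contains both `x` and `y` or neither.
theorem injOn_erase [DecidableEq α] (hF : IsLaminar F) {M : Finset α} (hM : Minimal (· ∈ F) M)
    {x y : α} (hx : x ∈ M) (hy : y ∈ M) (hxy : x ≠ y) :
    Set.InjOn (·.erase y) (F.erase M : Set (Finset α)) := by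
  have hyx : ∀ T ∈ F.erase M, y ∈ T → x ∈ T.erase y := fun T hT hyT =>
    Finset.mem_erase.2 ⟨hxy, hF.subset_of_minimal hM (Finset.mem_of_mem_erase hT)
      (Finset.ne_of_mem_erase hT) hy hyT hx⟩
  have hxy' : ∀ T ∈ F.erase M, x ∈ T.erase y → y ∈ T := fun T hT hxT =>
    hF.subset_of_minimal hM (Finset.mem_of_mem_erase hT) (Finset.ne_of_mem_erase hT) hx
      (Finset.mem_of_mem_erase hxT) hy
  intro T₁ h₁ T₂ h₂ h
  simp only at h
  by_cases hy₁ : y ∈ T₁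
  · have hy₂ : y ∈ T₂ := hxy' T₂ h₂ (h ▸ hyx T₁ h₁ hy₁)
    exact Finset.erase_injOn' y hy₁ hy₂ h
  · have hy₂ : y ∉ T₂ := fun hy₂ => hy₁ (hxy' T₁ h₁ (h ▸ hyx T₂ h₂ hy₂))
    rwa [Finset.erase_eq_of_notMem hy₁, Finset.erase_eq_of_notMem hy₂] at h

theorem card_le [DecidableEq α] {A : Finset α} (hF : IsLaminar F) (hFA : ∀ T ∈ F, T ⊆ A)
    (hF₂ : ∀ T ∈ F, 2 ≤ T.card) : F.card ≤ A.card - 1 := by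
  induction A using Finset.strongInduction generalizing F with
  | _ A ih =>
  obtain rfl | hFne := F.eq_empty_or_nonempty
  · simp
  obtain ⟨M, hM⟩ := Finset.exists_minimal hFne
  obtain ⟨x, hx, y, hy, hxy⟩ := Finset.one_lt_card.mp (hF₂ M hM.prop)
  have hyA : y ∈ A := hFA M hM.prop hy
  have hA₂ : 2 ≤ A.card := (hF₂ M hM.prop).trans (Finset.card_le_card (hFA M hM.prop))
  have hF' : ((F.erase M).image (·.erase y)).card ≤ (A.erase y).card - 1 := by
    refine ih _ (Finset.erase_ssubset hyA) ((hF.mono (F.erase_subset M)).image_erase y) ?_ ?_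
    · simp only [Finset.forall_mem_image]
      exact fun T hT => Finset.erase_subset_erase y (hFA T (Finset.mem_of_mem_erase hT))
    · simp only [Finset.forall_mem_image]
      intro T hT
      by_cases hyT : y ∈ T
      · have hMT : M ⊂ T := (hF.subset_of_minimal hM (Finset.mem_of_mem_erase hT)
          (Finset.ne_of_mem_erase hT) hy hyT).ssubset_of_ne (Finset.ne_of_mem_erase hT).symm
        have := Finset.card_lt_card hMT
        have := hF₂ M hM.prop
        rw [Finset.card_erase_of_mem hyT]
        omega
      · rw [Finset.erase_eq_of_notMem hyT]
        exact hF₂ T (Finset.mem_of_mem_erase hT)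
  rw [Finset.card_image_of_injOn (hF.injOn_erase hM hx hy hxy), Finset.card_erase_of_mem hM.prop,
    Finset.card_erase_of_mem hyA] at hF'
  have := Finset.card_pos.mpr hFne
  omega

end IsLaminar

namespace IsUltrametricDist

open scoped Classical

variable {X : Type*} [PseudoMetricSpace X] [IsUltrametricDist X]

theorem closedBall_dist_subset {a b c : X} {r : ℝ} (ha : a ∈ closedBall c r)
    (hb : b ∈ closedBall c r) : closedBall a (dist a b) ⊆ closedBall c r := by
  rw [closedBall_eq_of_mem ha] at hb ⊢
  exact closedBall_subset_closedBall (mem_closedBall'.1 hb)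

theorem isLaminar_of_forall_eq_filter_closedBall {A : Finset X}
    {F : Finset (Finset X)} (hF : ∀ T ∈ F, ∃ c r, T = {x ∈ A | x ∈ closedBall c r}) :
    IsLaminar F := by
  intro T₁ h₁ T₂ h₂
  obtain ⟨c₁, r₁, rfl⟩ := hF T₁ h₁
  obtain ⟨c₂, r₂, rfl⟩ := hF T₂ h₂
  rcases closedBall_subset_trichotomy c₁ c₂ r₁ r₂ with h | h | h
  · exact .inl (Finset.monotone_filter_right A fun _ _ hx => h hx)
  · exact .inr (.inl (Finset.monotone_filter_right A fun _ _ hx => h hx))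
  · exact .inr (.inr (Finset.disjoint_filter_filter' A A fun _ h₁ h₂ _ hx =>
      Set.disjoint_left.mp h (h₁ _ hx) (h₂ _ hx)))

theorem ncard_closedBall_dist_le (A : Finset X) :
    {B : Set X | ∃ a ∈ A, ∃ b ∈ A, a ≠ b ∧ B = closedBall a (dist a b)}.ncard ≤ A.card - 1 := by
  set S := {B : Set X | ∃ a ∈ A, ∃ b ∈ A, a ≠ b ∧ B = closedBall a (dist a b)}
  let trace : Set X → Finset X := fun B => {x ∈ A | x ∈ B}
  let F := A.offDiag.image fun ab => trace (closedBall ab.1 (dist ab.1 ab.2))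
  have hmaps : ∀ B ∈ S, trace B ∈ (F : Set (Finset X)) := by
    rintro _ ⟨a, ha, b, hb, hab, rfl⟩
    exact Finset.mem_image_of_mem _ (Finset.mem_offDiag.2 ⟨ha, hb, hab⟩ : (a, b) ∈ A.offDiag)
  have hcenter : ∀ {c d : X}, c ∈ closedBall c (dist c d) := mem_closedBall_self dist_nonneg
  have hradius : ∀ {c d : X}, d ∈ closedBall c (dist c d) := mem_closedBall'.2 le_rfl
  have hinj : Set.InjOn trace S := by
    rintro _ ⟨a, ha, b, hb, -, rfl⟩ _ ⟨a', ha', b', hb', -, rfl⟩ htrace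
    have hmem : ∀ x ∈ A, x ∈ closedBall a (dist a b) ↔ x ∈ closedBall a' (dist a' b') := by
      simpa [trace, Finset.ext_iff] using htrace
    exact (closedBall_dist_subset ((hmem a ha).1 hcenter) ((hmem b hb).1 hradius)).antisymm
      (closedBall_dist_subset ((hmem a' ha').2 hcenter) ((hmem b' hb').2 hradius))
  have hF₂ : ∀ T ∈ F, 2 ≤ T.card := by
    simp only [F, Finset.forall_mem_image, Finset.mem_offDiag]
    rintro ⟨a, b⟩ ⟨ha, hb, hab⟩
    exact Finset.one_lt_card.2
      ⟨a, Finset.mem_filter.2 ⟨ha, hcenter⟩, b, Finset.mem_filter.2 ⟨hb, hradius⟩, hab⟩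
  have hlam : IsLaminar F := isLaminar_of_forall_eq_filter_closedBall <| by
    simp only [F, Finset.forall_mem_image]
    exact fun _ _ => ⟨_, _, rfl⟩
  have hFA : ∀ T ∈ F, T ⊆ A := by
    simp only [F, Finset.forall_mem_image]
    exact fun _ _ => Finset.filter_subset _ _
  calc S.ncard ≤ (F : Set (Finset X)).ncard := Set.ncard_le_ncard_of_injOn trace hmaps hinj
    _ = F.card := Set.ncard_coe_finset F
    _ ≤ A.card - 1 := hlam.card_le hFA hF₂

end IsUltrametricDist

theorem stmt13_general {p : ℕ} [Fact p.Prime] (A : Finset ℚ_[p]) :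
    Set.ncard {B : Set ℚ_[p] | ∃ a ∈ A, ∃ b ∈ A, a ≠ b ∧
        B = Metric.closedBall a ‖a - b‖} ≤ A.card - 1 := by
  simpa only [dist_eq_norm] using IsUltrametricDist.ncard_closedBall_dist_le A

/-- For a finite nonempty set `A` in `ℚ_p`, there are at most `|A| − 1` distinct
balls of the form `B_{v(a−b)}(a)` (equivalently, closed balls of radius `‖a−b‖`
centered at `a`) with `a, b ∈ A`, `a ≠ b`. -/
theorem stmt13 {p : ℕ} [Fact p.Prime] (A : Finset ℚ_[p]) (hA : A.Nonempty) :
    Set.ncard {B : Set ℚ_[p] | ∃ a ∈ A, ∃ b ∈ A, a ≠ b ∧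
        B = Metric.closedBall a ‖a - b‖} ≤ A.card - 1 :=
  stmt13_general A
end

section
/- Let p be a prime, n > 1, and let x, y, a ∈ ℚ_p with v(y−x) > 2·v(n) + v(y−a), where v is the p-adic valuation. Then (x−a)/(y−a) is a nonzero n-th power in ℚ_p. -/
/-- Hensel-type lemma: if `n > 1` and `x, y, a ∈ ℚ_p` satisfy
`v(y−x) > 2·v(n) + v(y−a)` (with `v` the p-adic additive valuation), then
`(x−a)/(y−a)` is a nonzero `n`-th power in `ℚ_p`. -/
theorem stmt14 {p : ℕ} [Fact p.Prime] (n : ℕ) (hn : 1 < n) (x y a : ℚ_[p])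
    (h : 2 * Padic.addValuation (n : ℚ_[p]) + Padic.addValuation (y - a) <
          Padic.addValuation (y - x)) :
    ∃ z : ℚ_[p], z ≠ 0 ∧ z ^ n = (x - a) / (y - a) := by
  have hp1 : (1:ℝ) < p := by exact_mod_cast (Fact.out : p.Prime).one_lt
  have hp0 : (0:ℝ) < p := by linarith
  have hn0 : (n : ℚ_[p]) ≠ 0 := Nat.cast_ne_zero.mpr (by omega)
  have hya : y - a ≠ 0 := by
    intro hc
    rw [hc, AddValuation.map_zero, add_top] at h
    exact not_top_lt h
  by_cases hxy : x = y
  · exact ⟨1, one_ne_zero, by rw [hxy, one_pow, div_self hya]⟩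
  have hyx : y - x ≠ 0 := sub_ne_zero.mpr (Ne.symm hxy)
  set vn := (n : ℚ_[p]).valuation with hvn
  set vya := (y - a).valuation with hvya
  set vyx := (y - x).valuation with hvyx
  rw [Padic.addValuation.apply hn0, Padic.addValuation.apply hya,
    Padic.addValuation.apply hyx] at h
  have h' : 2 * vn + vya < vyx := by
    rw [show ((2:WithTop ℤ)) = ((2:ℤ):WithTop ℤ) by norm_cast] at h
    exact_mod_cast h
  have hvn0 : 0 ≤ vn := by
    rw [hvn, Padic.valuation_natCast]; positivity
  have hxa : x - a ≠ 0 := by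
    intro hc
    have hxa' : x = a := sub_eq_zero.mp hc
    have : vyx = vya := by rw [hvyx, hvya, hxa']
    omega
  -- the key norm inequality
  have key : ‖(x - y)/(y - a)‖ < ‖(n : ℚ_[p])‖^2 := by
    rw [norm_div, norm_sub_rev, Padic.norm_eq_zpow_neg_valuation hyx, Padic.norm_eq_zpow_neg_valuation hya,
      Padic.norm_eq_zpow_neg_valuation hn0, ← zpow_sub₀ (ne_of_gt hp0), sq,
      ← zpow_add₀ (ne_of_gt hp0)]
    exact zpow_lt_zpow_right₀ hp1 (by omega)
  have hnle : ‖(n : ℚ_[p])‖ ≤ 1 := by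
    have := Padic.norm_int_le_one (p := p) (n : ℤ)
    simpa using this
  set t : ℚ_[p] := (x - a)/(y - a) with hts
  have ht1 : t - 1 = (x - y)/(y - a) := by
    rw [hts, div_sub_one hya]
    congr 1
    ring
  have htnorm : ‖t - 1‖ < ‖(n : ℚ_[p])‖^2 := by rw [ht1]; exact key
  have htle : ‖t‖ ≤ 1 := by
    have h1 : ‖t - 1‖ ≤ 1 := le_trans htnorm.le (by nlinarith [norm_nonneg (n : ℚ_[p])])
    calc ‖t‖ = ‖(t - 1) + 1‖ := by ring_nf
    _ ≤ max ‖t - 1‖ ‖(1:ℚ_[p])‖ := Padic.nonarchimedean _ _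
    _ ≤ 1 := by simp [h1]
  set T : ℤ_[p] := ⟨t, htle⟩ with hT
  set F : Polynomial ℤ_[p] := Polynomial.X ^ n - Polynomial.C T with hF
  have hFe : F.eval 1 = 1 - T := by simp [hF]
  have hFd : F.derivative.eval 1 = (n : ℤ_[p]) := by
    simp [hF, Polynomial.derivative_X_pow]
  have hnorm : ‖F.eval 1‖ < ‖F.derivative.eval 1‖ ^ 2 := by
    rw [hFe, hFd]
    have e1 : ‖(1 - T : ℤ_[p])‖ = ‖t - 1‖ := by
      rw [PadicInt.norm_def]
      push_cast
      rw [norm_sub_rev]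
    have e2 : ‖(n : ℤ_[p])‖ = ‖(n : ℚ_[p])‖ := by
      rw [PadicInt.norm_def]; push_cast; rfl
    rw [e1, e2]; exact htnorm
  obtain ⟨z, hz, -⟩ := hensels_lemma hnorm
  have hzn : z ^ n = T := by
    have := hz
    simp [hF] at this
    linear_combination this
  refine ⟨(z : ℚ_[p]), ?_, ?_⟩
  · intro hc
    have hz0 : z = 0 := Subtype.ext hc
    rw [hz0] at hzn
    have : T = 0 := by rw [← hzn]; simp [zero_pow (by omega : n ≠ 0)]
    have ht0 : t = 0 := by
      have := congrArg (Subtype.val) this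
      simpa [hT] using this
    exact (div_ne_zero hxa hya) ht0
  · have := congrArg (Subtype.val) hzn
    push_cast at this
    simpa [hT, hts] using this
end

section
/- Let X be a set, < a linear order on X, and for some N ∈ ℕ let S be the family of all subsets of X that are unions of at most N convex subsets. Then there is a constant C such that for every t, the number of nonempty atoms of the Boolean algebra generated by any t sets from S is at most C·t; i.e., π*_S(t) = O(t). -/
/-- If every member of a family of subsets of a linear order is a union of at
most `N` convex sets, then the dual shatter function of the family is `O(t)`:
there is a constant `C` such that any `t ≥ 1` members generate at most `C·t`
nonempty Boolean atoms. -/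
theorem stmt15 {X : Type*} [LinearOrder X] (N : ℕ) :
    ∃ C : ℕ, ∀ (t : ℕ), 0 < t → ∀ A : Fin t → Set X,
      (∀ i, ∃ g : Fin N → Set X,
        (∀ j, ∀ a ∈ g j, ∀ b ∈ g j, ∀ x : X, a < x → x < b → x ∈ g j) ∧
        A i = ⋃ j, g j) →
      Set.ncard {T : Set X | T.Nonempty ∧ ∃ I : Finset (Fin t),
          T = ⋂ i, if i ∈ I then A i else (A i)ᶜ} ≤ C * t := by
  classical
  refine ⟨2 * N + 1, fun t ht A hA => ?_⟩
  choose g hconv hAeq using hA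
  -- downward closed "cut" sets
  set S : Fin t × Fin N × Bool → Set X := fun σ =>
    if σ.2.2 then {x | ∀ a ∈ g σ.1 σ.2.1, x < a}
    else {x | ∃ b ∈ g σ.1 σ.2.1, x ≤ b} with hS
  have dc : ∀ σ, ∀ x y : X, y ≤ x → x ∈ S σ → y ∈ S σ := by
    rintro ⟨i, j, b⟩ x y hyx hx
    cases b with
    | false =>
      obtain ⟨c, hc, hxc⟩ := hx
      exact ⟨c, hc, le_trans hyx hxc⟩
    | true =>
      intro a ha
      exact lt_of_le_of_lt hyx (hx a ha)
  have chain : ∀ σ τ, S σ ⊆ S τ ∨ S τ ⊆ S σ := by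
    intro σ τ
    by_contra hcon
    rw [not_or, Set.not_subset, Set.not_subset] at hcon
    obtain ⟨⟨a, haσ, haτ⟩, ⟨b, hbτ, hbσ⟩⟩ := hcon
    rcases le_total a b with h | h
    · exact haτ (dc τ b a h hbτ)
    · exact hbσ (dc σ a b h haσ)
  set c : X → ℕ := fun x => (Finset.univ.filter (fun σ => x ∈ S σ)).card with hc
  have mono : ∀ x y σ, x ∈ S σ → y ∉ S σ → c y < c x := by
    intro x y σ hx hy
    apply Finset.card_lt_card
    constructor
    · intro τ hτ
      simp only [Finset.mem_filter, Finset.mem_univ, true_and] at hτ ⊢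
      rcases chain τ σ with h | h
      · exact absurd (h hτ) hy
      · exact h hx
    · intro hsub
      have := hsub (by simp [hx] : σ ∈ Finset.univ.filter (fun σ => x ∈ S σ))
      simp only [Finset.mem_filter] at this
      exact hy this.2
  have key : ∀ x y : X, c x = c y → ∀ σ, (x ∈ S σ ↔ y ∈ S σ) := by
    intro x y hxy σ
    constructor
    · intro hx
      by_contra hy
      exact absurd hxy (Nat.ne_of_gt (mono x y σ hx hy))
    · intro hy
      by_contra hx
      exact absurd hxy.symm (Nat.ne_of_gt (mono y x σ hy hx))
  -- characterize g via S
  have hg : ∀ i j (x : X), x ∈ g i j ↔ (x ∈ S (i, j, false) ∧ x ∉ S (i, j, true)) := by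
    intro i j x
    simp only [hS, if_pos, if_neg, Bool.false_eq_true, not_false_iff, ite_true, ite_false,
      Set.mem_setOf_eq]
    constructor
    · intro hx
      refine ⟨⟨x, hx, le_refl x⟩, ?_⟩
      intro hall
      exact lt_irrefl x (hall x hx)
    · rintro ⟨⟨b, hb, hxb⟩, hnot⟩
      push_neg at hnot
      obtain ⟨a, ha, hax⟩ := hnot
      rcases eq_or_lt_of_le hax with rfl | hax'
      · exact ha
      · rcases eq_or_lt_of_le hxb with rfl | hxb'
        · exact hb
        · exact hconv i j a ha b hb x hax' hxb'
  have memA : ∀ x y : X, c x = c y → ∀ i, (x ∈ A i ↔ y ∈ A i) := by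
    intro x y hxy i
    rw [hAeq, Set.mem_iUnion, Set.mem_iUnion]
    constructor
    · rintro ⟨j, hj⟩
      refine ⟨j, ?_⟩
      rw [hg] at hj ⊢
      exact ⟨(key x y hxy _).1 hj.1, fun h => hj.2 ((key x y hxy _).2 h)⟩
    · rintro ⟨j, hj⟩
      refine ⟨j, ?_⟩
      rw [hg] at hj ⊢
      exact ⟨(key x y hxy _).2 hj.1, fun h => hj.2 ((key x y hxy _).1 h)⟩
  set Φ : X → Set X := fun x => ⋂ i, if x ∈ A i then A i else (A i)ᶜ with hΦ
  have Φcong : ∀ x y : X, c x = c y → Φ x = Φ y := by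
    intro x y hxy
    simp only [hΦ]
    exact Set.iInter_congr fun i => if_congr (memA x y hxy i) rfl rfl
  set Ψ : ℕ → Set X := fun n => if h : ∃ x, c x = n then Φ h.choose else ∅ with hΨ
  have hsub : {T : Set X | T.Nonempty ∧ ∃ I : Finset (Fin t),
      T = ⋂ i, if i ∈ I then A i else (A i)ᶜ} ⊆ Ψ '' ↑(Finset.Iic (2 * N * t)) := by
    rintro T ⟨⟨x, hxT⟩, I, rfl⟩
    have hxmem : ∀ i, x ∈ (if i ∈ I then A i else (A i)ᶜ) := by
      intro i
      exact Set.mem_iInter.1 hxT i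
    have hiff : ∀ i, ((i ∈ I) ↔ x ∈ A i) := by
      intro i
      have := hxmem i
      by_cases h : i ∈ I
      · rw [if_pos h] at this; exact ⟨fun _ => this, fun _ => h⟩
      · rw [if_neg h] at this; exact ⟨fun h' => absurd h' h, fun h' => absurd h' this⟩
    have hTΦ : (⋂ i, if i ∈ I then A i else (A i)ᶜ) = Φ x := by
      simp only [hΦ]
      exact Set.iInter_congr fun i => if_congr (hiff i) rfl rfl
    have hcle : c x ≤ 2 * N * t := by
      have h1 : c x ≤ Fintype.card (Fin t × Fin N × Bool) := by
        rw [← Finset.card_univ]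
        exact Finset.card_filter_le _ _
      have h2 : Fintype.card (Fin t × Fin N × Bool) = 2 * N * t := by
        simp [Fintype.card_prod]
        ring
      omega
    refine ⟨c x, by simpa using hcle, ?_⟩
    have hex : ∃ y, c y = c x := ⟨x, rfl⟩
    rw [hΨ]
    simp only [dif_pos hex]
    rw [Φcong hex.choose x hex.choose_spec, hTΦ]
  calc Set.ncard {T : Set X | T.Nonempty ∧ ∃ I : Finset (Fin t),
          T = ⋂ i, if i ∈ I then A i else (A i)ᶜ}
      ≤ (Ψ '' ↑(Finset.Iic (2 * N * t))).ncard :=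
        Set.ncard_le_ncard hsub ((Finset.Iic (2 * N * t)).finite_toSet.image Ψ)
    _ ≤ (↑(Finset.Iic (2 * N * t)) : Set ℕ).ncard :=
        Set.ncard_image_le (Finset.Iic (2 * N * t)).finite_toSet
    _ = 2 * N * t + 1 := by rw [Set.ncard_coe_finset, Nat.card_Iic]
    _ ≤ (2 * N + 1) * t := by nlinarith
end
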